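/- arXiv:1506.09200 — 3 statements merged into one kernel-verified Lean document; each statement's English description precedes it below -/
import Mathlib

section
/- The squared energy dual norm of the residual admits the spectral representation ‖r‖_{a,*}² = Σ_{l=1}^{𝒩} α_l² · ((λ_l − λ_red)/λ_l)² · λ_l. -/
/-!
Expanding in the eigenbasis, the residual is the functional `v ↦ Σ_l x_l ⟪u_l, v⟫` with
`x_l = α_l (λ_l − λ_red)`, and the energy is `a(v,v) = Σ_l λ_l ⟪u_l, v⟫²`. By the weighted
Cauchy–Schwarz inequality `(Σ x_l c_l)² ≤ (Σ x_l²/λ_l)(Σ λ_l c_l²)` the quotient in the dual norm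
is at most `√(Σ x_l²/λ_l)`, with equality at `c_l = x_l/λ_l`.
-/

open scoped RealInnerProductSpace

theorem Real.div_sqrt_le_sqrt_of_sq_le_mul {x y T : ℝ} (hT : 0 ≤ T) (h : x ^ 2 ≤ T * y) :
    x / √y ≤ √T := by
  rcases le_or_gt y 0 with hy | hy
  · rw [Real.sqrt_eq_zero'.mpr hy, div_zero]
    exact Real.sqrt_nonneg T
  · rw [div_le_iff₀ (Real.sqrt_pos.mpr hy), ← Real.sqrt_mul hT]
    exact Real.le_sqrt_of_sq_le h

namespace OrthonormalBasis

variable {ι V : Type*} [Fintype ι] [NormedAddCommGroup V] [InnerProductSpace ℝ V]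

theorem bilinear_apply_eq_sum_of_apply_eq_mul_inner (b : OrthonormalBasis ι ℝ V)
    (a : V →ₗ[ℝ] V →ₗ[ℝ] ℝ) (lam : ι → ℝ) (heig : ∀ i v, a (b i) v = lam i * ⟪b i, v⟫)
    (u v : V) : a u v = ∑ i, lam i * ⟪u, b i⟫ * ⟪b i, v⟫ := by
  conv_lhs => rw [← b.sum_repr' u]
  simp only [map_sum, map_smul, LinearMap.sum_apply, LinearMap.smul_apply, heig, smul_eq_mul,
    real_inner_comm u]
  exact Finset.sum_congr rfl fun i _ => by ring

theorem iSup_sum_mul_inner_div_sqrt_eq_sqrt_sum_sq_div (b : OrthonormalBasis ι ℝ V)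
    {w : ι → ℝ} (hw : ∀ i, 0 < w i) (x : ι → ℝ) :
    ⨆ v : {v : V // v ≠ 0}, (∑ i, x i * ⟪b i, v.1⟫) / √(∑ i, w i * ⟪b i, v.1⟫ ^ 2) =
      √(∑ i, x i ^ 2 / w i) := by
  set T := ∑ i, x i ^ 2 / w i
  have hT : 0 ≤ T := Finset.sum_nonneg fun i _ => div_nonneg (sq_nonneg _) (hw i).le
  have hle (v : V) : (∑ i, x i * ⟪b i, v⟫) / √(∑ i, w i * ⟪b i, v⟫ ^ 2) ≤ √T := by
    refine Real.div_sqrt_le_sqrt_of_sq_le_mul hT <| Finset.sum_sq_le_sum_mul_sum_of_sq_le_mul _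
      (fun i _ => div_nonneg (sq_nonneg _) (hw i).le)
      (fun i _ => mul_nonneg (hw i).le (sq_nonneg _)) fun i _ => le_of_eq ?_
    field_simp [(hw i).ne']
  rcases hT.eq_or_lt with hT0 | hTpos
  · have hx (i : ι) : x i = 0 := by
      have := (Finset.sum_eq_zero_iff_of_nonneg fun j _ =>
        div_nonneg (sq_nonneg (x j)) (hw j).le).mp hT0.symm i (Finset.mem_univ i)
      simpa [(hw i).ne'] using this
    simp only [hx, zero_mul, Finset.sum_const_zero, zero_div, Real.iSup_const_zero, ← hT0,
      Real.sqrt_zero]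
  · set v₀ := ∑ i, (x i / w i) • b i
    have hcoord (i : ι) : ⟪b i, v₀⟫ = x i / w i := b.orthonormal.inner_right_fintype _ i
    have hnum : ∑ i, x i * ⟪b i, v₀⟫ = T :=
      Finset.sum_congr rfl fun i _ => by rw [hcoord]; ring
    have hden : ∑ i, w i * ⟪b i, v₀⟫ ^ 2 = T :=
      Finset.sum_congr rfl fun i _ => by rw [hcoord]; field_simp [(hw i).ne']
    have hv₀ : v₀ ≠ 0 := by
      rintro h
      simp only [h, inner_zero_right, mul_zero, Finset.sum_const_zero] at hnum
      exact hTpos.ne hnum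
    have : Nonempty {v : V // v ≠ 0} := ⟨⟨v₀, hv₀⟩⟩
    refine le_antisymm (ciSup_le fun v => hle v.1) ?_
    refine le_ciSup_of_le ⟨√T, ?_⟩ ⟨v₀, hv₀⟩ ?_
    · rintro _ ⟨v, rfl⟩
      exact hle v.1
    · rw [hnum, hden, Real.div_sqrt]

end OrthonormalBasis

theorem residual_dual_norm_spectral_representation_general
    {V : Type*} [NormedAddCommGroup V] [InnerProductSpace ℝ V]
    {n : ℕ}
    (b : OrthonormalBasis (Fin n) ℝ V)
    (a : V →ₗ[ℝ] V →ₗ[ℝ] ℝ)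
    (lam : Fin n → ℝ)
    (hlam_pos : ∀ l, 0 < lam l)
    (heig : ∀ (l : Fin n) (v : V), a (b l) v = lam l * ⟪b l, v⟫)
    (lamred : ℝ) (ured : V)
    (rnorm : ℝ)
    (hrnorm : rnorm = ⨆ v : {w : V // w ≠ 0},
        (a ured v.1 - lamred * ⟪ured, v.1⟫) / Real.sqrt (a v.1 v.1)) :
    rnorm ^ 2 = ∑ l : Fin n,
      ⟪ured, b l⟫ ^ 2 * ((lam l - lamred) / lam l) ^ 2 * lam l := by
  have hexpand := b.bilinear_apply_eq_sum_of_apply_eq_mul_inner a lam heig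
  have hresidual (v : V) : a ured v - lamred * ⟪ured, v⟫ =
      ∑ l, ⟪ured, b l⟫ * (lam l - lamred) * ⟪b l, v⟫ := by
    rw [hexpand, ← b.sum_inner_mul_inner ured v, Finset.mul_sum, ← Finset.sum_sub_distrib]
    exact Finset.sum_congr rfl fun l _ => by ring
  have henergy (v : V) : a v v = ∑ l, lam l * ⟪b l, v⟫ ^ 2 := by
    rw [hexpand]
    exact Finset.sum_congr rfl fun l _ => by rw [real_inner_comm v]; ring
  simp_rw [hrnorm, hresidual, henergy]
  rw [b.iSup_sum_mul_inner_div_sqrt_eq_sqrt_sum_sq_div hlam_pos,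
    Real.sq_sqrt (Finset.sum_nonneg fun l _ => div_nonneg (sq_nonneg _) (hlam_pos l).le)]
  exact Finset.sum_congr rfl fun l _ => by field_simp [(hlam_pos l).ne']

/-- Spectral representation of the squared energy dual norm of the residual:
`‖r‖_{a,*}² = Σ_l α_l² ((λ_l − λ_red)/λ_l)² λ_l`. -/
theorem residual_dual_norm_spectral_representation
    {V : Type*} [NormedAddCommGroup V] [InnerProductSpace ℝ V] [FiniteDimensional ℝ V]
    {n : ℕ}
    (b : OrthonormalBasis (Fin n) ℝ V)
    (a : V →ₗ[ℝ] V →ₗ[ℝ] ℝ)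
    (ha_symm : ∀ v w : V, a v w = a w v)
    (ha_pos : ∀ v : V, v ≠ 0 → 0 < a v v)
    (lam : Fin n → ℝ)
    (hlam_pos : ∀ l, 0 < lam l)
    (hlam_mono : Monotone lam)
    (heig : ∀ (l : Fin n) (v : V), a (b l) v = lam l * ⟪b l, v⟫)
    (lamred : ℝ) (ured : V)
    (hnorm : ⟪ured, ured⟫ = 1)
    (rnorm : ℝ)
    (hrnorm : rnorm = ⨆ v : {w : V // w ≠ 0},
        (a ured v.1 - lamred * ⟪ured, v.1⟫) / Real.sqrt (a v.1 v.1)) :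
    rnorm ^ 2 = ∑ l : Fin n,
      ⟪ured, b l⟫ ^ 2 * ((lam l - lamred) / lam l) ^ 2 * lam l :=
  residual_dual_norm_spectral_representation_general b a lam hlam_pos heig lamred ured rnorm hrnorm
end

section
/- Let 1 ≤ k and q ≥ 1 with k+q−1 < 𝒩, and define d̃ := min over l with k+q−1 < l ≤ 𝒩 of |(λ_l − λ_red)/λ_l|. Then ‖r‖_{a,*}² ≥ d̃² · Σ_{l > k+q−1} α_l² λ_l. -/
open scoped RealInnerProductSpace

/-!
In the eigenbasis `a` is diagonal, `a u v = ∑ λ_l ⟪u_l, u⟫ ⟪u_l, v⟫`, so the residual is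
represented in `a` by the vector `w` with coordinates `α_l (λ_l - λ_red) / λ_l`. By
Cauchy–Schwarz for `a` the supremum defining `‖r‖_{a,*}` is finite, and testing it with the
`a`-orthogonal projection `v₀` of `w` onto the span of the `u_l`, `l > k + q - 1`, gives
`‖r‖_{a,*}² ≥ a v₀ v₀ = ∑_{l > k+q-1} α_l² λ_l ((λ_l - λ_red) / λ_l)² ≥ d̃² ∑_{l > k+q-1} α_l² λ_l`.
-/

lemma sq_iInf_abs_le_sq {ι : Type*} (f : ι → ℝ) (i : ι) : (⨅ j, |f j|) ^ 2 ≤ f i ^ 2 := by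
  rw [← sq_abs (f i)]
  have hbdd : BddBelow (Set.range fun j => |f j|) := ⟨0, by rintro _ ⟨j, rfl⟩; exact abs_nonneg _⟩
  exact pow_le_pow_left₀ (Real.iInf_nonneg fun j => abs_nonneg _) (ciInf_le hbdd i) 2

namespace LinearMap.BilinForm

variable {M : Type*} [AddCommGroup M] [Module ℝ M] (B : LinearMap.BilinForm ℝ M)

lemma apply_le_sqrt_mul_sqrt (hB : LinearMap.IsSymm B) (hs : ∀ x, 0 ≤ B x x) (w v : M) :
    B w v ≤ √(B w w) * √(B v v) := by
  rw [← Real.sqrt_mul (hs w)]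
  exact Real.le_sqrt_of_sq_le (B.apply_sq_le_of_symm hs hB w v)

lemma bddAbove_range_apply_div_sqrt (hB : LinearMap.IsSymm B) (hs : ∀ x, 0 ≤ B x x) (w : M) :
    BddAbove (Set.range fun v : {v : M // v ≠ 0} => B w v / √(B v v)) := by
  refine ⟨√(B w w), ?_⟩
  rintro _ ⟨v, rfl⟩
  exact div_le_of_le_mul₀ (Real.sqrt_nonneg _) (Real.sqrt_nonneg _)
    (B.apply_le_sqrt_mul_sqrt hB hs w v)

lemma apply_self_le_sq_iSup_apply_div_sqrt (hB : LinearMap.IsSymm B) (hs : ∀ x, 0 ≤ B x x)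
    {w v : M} (hwv : B w v = B v v) :
    B v v ≤ (⨆ u : {u : M // u ≠ 0}, B w u / √(B u u)) ^ 2 := by
  rcases eq_or_ne v 0 with rfl | hv
  · simpa using sq_nonneg _
  have hle : √(B v v) ≤ ⨆ u : {u : M // u ≠ 0}, B w u / √(B u u) := by
    have := le_ciSup (B.bddAbove_range_apply_div_sqrt hB hs w) ⟨v, hv⟩
    rwa [hwv, Real.div_sqrt] at this
  calc B v v = √(B v v) ^ 2 := (Real.sq_sqrt (hs v)).symm
    _ ≤ _ := pow_le_pow_left₀ (Real.sqrt_nonneg _) hle 2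

end LinearMap.BilinForm

namespace OrthonormalBasis

variable {ι V : Type*} [Fintype ι] [NormedAddCommGroup V] [InnerProductSpace ℝ V]
  (b : OrthonormalBasis ι ℝ V) {a : LinearMap.BilinForm ℝ V} {lam : ι → ℝ}

lemma bilinForm_apply_eq_sum (heig : ∀ (l : ι) (v : V), a (b l) v = lam l * ⟪b l, v⟫)
    (u v : V) : a u v = ∑ l, lam l * ⟪b l, u⟫ * ⟪b l, v⟫ := by
  conv_lhs => rw [← b.sum_repr' u]
  simp only [map_sum, map_smul, LinearMap.sum_apply, LinearMap.smul_apply, smul_eq_mul, heig]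
  exact Finset.sum_congr rfl fun l _ => by ring

lemma bilinForm_isSymm (heig : ∀ (l : ι) (v : V), a (b l) v = lam l * ⟪b l, v⟫) :
    LinearMap.IsSymm a :=
  LinearMap.isSymm_def.2 fun u v => by
    simp only [b.bilinForm_apply_eq_sum heig, mul_right_comm, RingHom.id_apply]

lemma bilinForm_apply_self_nonneg (heig : ∀ (l : ι) (v : V), a (b l) v = lam l * ⟪b l, v⟫)
    (hlam : ∀ l, 0 ≤ lam l) (v : V) : 0 ≤ a v v := by
  rw [b.bilinForm_apply_eq_sum heig]
  exact Finset.sum_nonneg fun l _ => by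
    rw [mul_assoc]
    exact mul_nonneg (hlam l) (mul_self_nonneg _)

lemma bilinForm_apply_sum_smul_sum_smul
    (heig : ∀ (l : ι) (v : V), a (b l) v = lam l * ⟪b l, v⟫) (c c' : ι → ℝ) :
    a (∑ l, c l • b l) (∑ l, c' l • b l) = ∑ l, lam l * c l * c' l := by
  simp only [b.bilinForm_apply_eq_sum heig, b.orthonormal.inner_right_fintype]

lemma bilinForm_apply_sum_smul_sum_ite_smul [DecidableEq ι]
    (heig : ∀ (l : ι) (v : V), a (b l) v = lam l * ⟪b l, v⟫) (c : ι → ℝ) (S : Finset ι) :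
    a (∑ l, c l • b l) (∑ l, (if l ∈ S then c l else 0) • b l) = ∑ l ∈ S, lam l * c l ^ 2 := by
  rw [b.bilinForm_apply_sum_smul_sum_smul heig, ← Fintype.sum_ite_mem S fun l => lam l * c l ^ 2]
  exact Finset.sum_congr rfl fun l _ => by split_ifs <;> ring

lemma bilinForm_apply_sum_ite_smul_self [DecidableEq ι]
    (heig : ∀ (l : ι) (v : V), a (b l) v = lam l * ⟪b l, v⟫) (c : ι → ℝ) (S : Finset ι) :
    a (∑ l, (if l ∈ S then c l else 0) • b l) (∑ l, (if l ∈ S then c l else 0) • b l) =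
      ∑ l ∈ S, lam l * c l ^ 2 := by
  rw [b.bilinForm_apply_sum_smul_sum_smul heig, ← Fintype.sum_ite_mem S fun l => lam l * c l ^ 2]
  exact Finset.sum_congr rfl fun l _ => by split_ifs <;> ring

lemma bilinForm_apply_sub_smul_inner
    (heig : ∀ (l : ι) (v : V), a (b l) v = lam l * ⟪b l, v⟫) (hlam : ∀ l, lam l ≠ 0)
    (μ : ℝ) (u v : V) :
    a u v - μ * ⟪u, v⟫ = a (∑ l, (⟪b l, u⟫ * ((lam l - μ) / lam l)) • b l) v := by
  rw [b.bilinForm_apply_eq_sum heig, b.bilinForm_apply_eq_sum heig, ← b.sum_inner_mul_inner u v,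
    Finset.mul_sum, ← Finset.sum_sub_distrib]
  refine Finset.sum_congr rfl fun l _ => ?_
  rw [b.orthonormal.inner_right_fintype, real_inner_comm u]
  field_simp [hlam l]

end OrthonormalBasis

theorem residual_dual_norm_lower_bound_general
    {V : Type*} [NormedAddCommGroup V] [InnerProductSpace ℝ V]
    {n : ℕ}
    (b : OrthonormalBasis (Fin n) ℝ V)
    (a : V →ₗ[ℝ] V →ₗ[ℝ] ℝ)
    (lam : Fin n → ℝ)
    (hlam_pos : ∀ l, 0 < lam l)
    (heig : ∀ (l : Fin n) (v : V), a (b l) v = lam l * ⟪b l, v⟫)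
    (lamred : ℝ) (ured : V)
    (k q : ℕ)
    (dtil : ℝ)
    (hdtil : dtil =
      ⨅ l : {i : Fin n // k + q - 1 < (i : ℕ) + 1}, |(lam l.1 - lamred) / lam l.1|)
    (rnorm : ℝ)
    (hrnorm : rnorm = ⨆ v : {w : V // w ≠ 0},
        (a ured v.1 - lamred * ⟪ured, v.1⟫) / Real.sqrt (a v.1 v.1)) :
    rnorm ^ 2 ≥ dtil ^ 2 *
      ∑ l ∈ Finset.univ.filter (fun i : Fin n => k + q - 1 < (i : ℕ) + 1),
        ⟪ured, b l⟫ ^ 2 * lam l := by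
  set S := Finset.univ.filter (fun i : Fin n => k + q - 1 < (i : ℕ) + 1)
  set c : Fin n → ℝ := fun l => ⟪b l, ured⟫ * ((lam l - lamred) / lam l)
  set w := ∑ l, c l • b l
  -- `v₀` is the `a`-orthogonal projection of the representer `w` onto the span of `b l`, `l ∈ S`.
  set v₀ := ∑ l, (if l ∈ S then c l else 0) • b l
  have hr : rnorm = ⨆ v : {v : V // v ≠ 0}, a w v / √(a v v) := by
    simp only [hrnorm, b.bilinForm_apply_sub_smul_inner heig (fun l => (hlam_pos l).ne'), w, c]
  have hv₀ : a v₀ v₀ = ∑ l ∈ S, lam l * c l ^ 2 := b.bilinForm_apply_sum_ite_smul_self heig c S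
  have hwv₀ : a w v₀ = a v₀ v₀ := (b.bilinForm_apply_sum_smul_sum_ite_smul heig c S).trans hv₀.symm
  have hterm : ∀ l ∈ S, dtil ^ 2 * (⟪ured, b l⟫ ^ 2 * lam l) ≤ lam l * c l ^ 2 := by
    intro l hl
    have hd : dtil ^ 2 ≤ ((lam l - lamred) / lam l) ^ 2 :=
      hdtil ▸ sq_iInf_abs_le_sq (fun i : {i : Fin n // k + q - 1 < (i : ℕ) + 1} =>
        (lam i.1 - lamred) / lam i.1) ⟨l, (Finset.mem_filter.1 hl).2⟩
    calc dtil ^ 2 * (⟪ured, b l⟫ ^ 2 * lam l)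
        ≤ ((lam l - lamred) / lam l) ^ 2 * (⟪ured, b l⟫ ^ 2 * lam l) :=
          mul_le_mul_of_nonneg_right hd (by positivity [hlam_pos l])
      _ = lam l * c l ^ 2 := by rw [real_inner_comm]; ring
  calc dtil ^ 2 * ∑ l ∈ S, ⟪ured, b l⟫ ^ 2 * lam l
      = ∑ l ∈ S, dtil ^ 2 * (⟪ured, b l⟫ ^ 2 * lam l) := Finset.mul_sum _ _ _
    _ ≤ ∑ l ∈ S, lam l * c l ^ 2 := Finset.sum_le_sum hterm
    _ = a v₀ v₀ := hv₀.symm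
    _ ≤ rnorm ^ 2 := hr ▸ LinearMap.BilinForm.apply_self_le_sq_iSup_apply_div_sqrt a
          (b.bilinForm_isSymm heig) (b.bilinForm_apply_self_nonneg heig fun l => (hlam_pos l).le)
          hwv₀

/-- Lower bound for the squared residual dual norm:
`‖r‖_{a,*}² ≥ d̃² · Σ_{l > k+q−1} α_l² λ_l`. -/
theorem residual_dual_norm_lower_bound
    {V : Type*} [NormedAddCommGroup V] [InnerProductSpace ℝ V] [FiniteDimensional ℝ V]
    {n : ℕ}
    (b : OrthonormalBasis (Fin n) ℝ V)
    (a : V →ₗ[ℝ] V →ₗ[ℝ] ℝ)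
    (ha_symm : ∀ v w : V, a v w = a w v)
    (ha_pos : ∀ v : V, v ≠ 0 → 0 < a v v)
    (lam : Fin n → ℝ)
    (hlam_pos : ∀ l, 0 < lam l)
    (hlam_mono : Monotone lam)
    (heig : ∀ (l : Fin n) (v : V), a (b l) v = lam l * ⟪b l, v⟫)
    (lamred : ℝ) (ured : V)
    (hnorm : ⟪ured, ured⟫ = 1)
    (k q : ℕ) (hk : 1 ≤ k) (hq : 1 ≤ q) (hkq : k + q - 1 < n)
    (dtil : ℝ)
    (hdtil : dtil =
      ⨅ l : {i : Fin n // k + q - 1 < (i : ℕ) + 1}, |(lam l.1 - lamred) / lam l.1|)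
    (rnorm : ℝ)
    (hrnorm : rnorm = ⨆ v : {w : V // w ≠ 0},
        (a ured v.1 - lamred * ⟪ured, v.1⟫) / Real.sqrt (a v.1 v.1)) :
    rnorm ^ 2 ≥ dtil ^ 2 *
      ∑ l ∈ Finset.univ.filter (fun i : Fin n => k + q - 1 < (i : ℕ) + 1),
        ⟪ured, b l⟫ ^ 2 * lam l :=
  residual_dual_norm_lower_bound_general b a lam hlam_pos heig lamred ured k q dtil hdtil rnorm
    hrnorm
end

section
/- Let 1 ≤ k and q ≥ 1 with k+q−1 ≤ 𝒩, and define d̂ := min over l with (l > k+q−1 or l < k), 1 ≤ l ≤ 𝒩, of |(λ_l − λ_red)/λ_l|; assume d̂ > 0. Let v̄ := Σ_{k ≤ l ≤ k+q−1} α_l u_l be the m-orthogonal projection of u_red onto the eigenspace span{u_k, …, u_{k+q−1}}. Then a(u_red − v̄, u_red − v̄) = Σ_{l > k+q−1 or l < k} α_l² λ_l ≤ ‖r‖_{a,*}² / d̂². -/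
/-!
In the `m`-orthonormal eigenbasis `a` is diagonal: `a x y = ∑ λ_l ⟪x, u_l⟫ ⟪y, u_l⟫` and the
residual is `r v = ∑ (λ_l - λ_red) α_l ⟪v, u_l⟫`. Hence `a(u_red - v̄, u_red - v̄)` is the sum of
`α_l² λ_l` over the indices outside the cluster, each term of which is at most
`(λ_l - λ_red)² α_l² / λ_l / d̂²`. Testing `r` against `w = ∑ (λ_l - λ_red) / λ_l · α_l u_l`
(over those indices) gives `r w = a(w, w) = ∑ (λ_l - λ_red)² α_l² / λ_l`, so this sum is at most
`‖r‖_{a,*}²`. Cauchy–Schwarz in coordinates shows the supremum defining `‖r‖_{a,*}` is finite,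
which matters because an unbounded `⨆` is `0` in Lean.
-/

open scoped RealInnerProductSpace

section EigenbasisCoordinates

variable {V : Type*} [NormedAddCommGroup V] [InnerProductSpace ℝ V] {n : ℕ}
  {b : OrthonormalBasis (Fin n) ℝ V} {a : V →ₗ[ℝ] V →ₗ[ℝ] ℝ} {lam : Fin n → ℝ}

theorem apply_eigenvector_right (heig : ∀ (l : Fin n) (v : V), a (b l) v = lam l * ⟪b l, v⟫)
    (x : V) (l : Fin n) : a x (b l) = lam l * ⟪x, b l⟫ := by
  conv_lhs => rw [← b.sum_repr' x]
  simp only [map_sum, map_smul, LinearMap.sum_apply, LinearMap.smul_apply, smul_eq_mul, heig,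
    b.inner_eq_ite, mul_ite, mul_one, mul_zero, Finset.sum_ite_eq', Finset.mem_univ, if_true]
  rw [real_inner_comm]
  ring

theorem apply_sum_smul_sub_inner (heig : ∀ (l : Fin n) (v : V), a (b l) v = lam l * ⟪b l, v⟫)
    (x : V) (μ : ℝ) (s : Finset (Fin n)) (c : Fin n → ℝ) :
    a x (∑ l ∈ s, c l • b l) - μ * ⟪x, ∑ l ∈ s, c l • b l⟫ =
      ∑ l ∈ s, c l * (lam l - μ) * ⟪x, b l⟫ := by
  simp only [map_sum, map_smul, smul_eq_mul, apply_eigenvector_right heig, inner_sum,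
    real_inner_smul_right, Finset.mul_sum, ← Finset.sum_sub_distrib]
  exact Finset.sum_congr rfl fun l _ => by ring

theorem residual_eq_sum (heig : ∀ (l : Fin n) (v : V), a (b l) v = lam l * ⟪b l, v⟫)
    (x v : V) (μ : ℝ) :
    a x v - μ * ⟪x, v⟫ = ∑ l, (lam l - μ) * ⟪x, b l⟫ * ⟪v, b l⟫ := by
  conv_lhs => rw [← b.sum_repr' v]
  rw [apply_sum_smul_sub_inner heig]
  exact Finset.sum_congr rfl fun l _ => by rw [real_inner_comm v]; ring

theorem apply_self_eq_sum (heig : ∀ (l : Fin n) (v : V), a (b l) v = lam l * ⟪b l, v⟫) (v : V) :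
    a v v = ∑ l, lam l * ⟪v, b l⟫ ^ 2 := by
  simpa [mul_assoc, sq] using residual_eq_sum heig v v 0

theorem apply_sum_smul_self (heig : ∀ (l : Fin n) (v : V), a (b l) v = lam l * ⟪b l, v⟫)
    (s : Finset (Fin n)) (c : Fin n → ℝ) :
    a (∑ l ∈ s, c l • b l) (∑ l ∈ s, c l • b l) = ∑ l ∈ s, c l ^ 2 * lam l := by
  have h := apply_sum_smul_sub_inner heig (∑ l ∈ s, c l • b l) 0 s c
  rw [zero_mul, sub_zero] at h
  rw [h]
  refine Finset.sum_congr rfl fun l hl => ?_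
  rw [b.orthonormal.inner_left_sum c hl, conj_trivial]
  ring

theorem residual_sq_le (heig : ∀ (l : Fin n) (v : V), a (b l) v = lam l * ⟪b l, v⟫)
    (hlam : ∀ l, 0 < lam l) (x v : V) (μ : ℝ) :
    (a x v - μ * ⟪x, v⟫) ^ 2 ≤ (∑ l, (lam l - μ) ^ 2 * ⟪x, b l⟫ ^ 2 / lam l) * a v v := by
  rw [residual_eq_sum heig, apply_self_eq_sum heig]
  refine Finset.sum_sq_le_sum_mul_sum_of_sq_le_mul _ (fun l _ => by have := hlam l; positivity)
    (fun l _ => by have := hlam l; positivity) fun l _ => le_of_eq ?_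
  field_simp [(hlam l).ne']

variable (a) in
/-- The energy dual norm `‖r‖_{a,*}` of the residual `r v = a x v - μ ⟪x, v⟫`. -/
noncomputable def residualDualNorm (μ : ℝ) (x : V) : ℝ :=
  ⨆ v : {w : V // w ≠ 0}, (a x v - μ * ⟪x, v.1⟫) / Real.sqrt (a v v)

theorem residual_div_sqrt_le_residualDualNorm
    (heig : ∀ (l : Fin n) (v : V), a (b l) v = lam l * ⟪b l, v⟫)
    (hlam : ∀ l, 0 < lam l) (μ : ℝ) (x : V) {v : V} (hv : v ≠ 0) :
    (a x v - μ * ⟪x, v⟫) / Real.sqrt (a v v) ≤ residualDualNorm a μ x := by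
  set C := ∑ l, (lam l - μ) ^ 2 * ⟪x, b l⟫ ^ 2 / lam l
  have hC : 0 ≤ C := Finset.sum_nonneg fun l _ => by have := hlam l; positivity
  refine le_ciSup (f := fun w : {w : V // w ≠ 0} => (a x w - μ * ⟪x, w.1⟫) / Real.sqrt (a w w))
    ⟨Real.sqrt C, ?_⟩ ⟨v, hv⟩
  rintro _ ⟨⟨w, -⟩, rfl⟩
  refine div_le_of_le_mul₀ (Real.sqrt_nonneg _) (Real.sqrt_nonneg _) ?_
  rw [← Real.sqrt_mul hC]
  exact Real.le_sqrt_of_sq_le (residual_sq_le heig hlam x w μ)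

theorem sum_sq_le_residualDualNorm_sq
    (heig : ∀ (l : Fin n) (v : V), a (b l) v = lam l * ⟪b l, v⟫)
    (hlam : ∀ l, 0 < lam l) (μ : ℝ) (x : V) (s : Finset (Fin n)) :
    ∑ l ∈ s, (lam l - μ) ^ 2 * ⟪x, b l⟫ ^ 2 / lam l ≤ residualDualNorm a μ x ^ 2 := by
  set T := ∑ l ∈ s, (lam l - μ) ^ 2 * ⟪x, b l⟫ ^ 2 / lam l
  have hT0 : 0 ≤ T := Finset.sum_nonneg fun l _ => by have := hlam l; positivity
  obtain hT | hT := hT0.eq_or_lt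
  · rw [← hT]
    positivity
  -- the Riesz representative of the residual, restricted to `s`
  set w := ∑ l ∈ s, ((lam l - μ) / lam l * ⟪x, b l⟫) • b l
  have hrw : a x w - μ * ⟪x, w⟫ = T := by
    rw [apply_sum_smul_sub_inner heig]
    exact Finset.sum_congr rfl fun l _ => by field_simp [(hlam l).ne']
  have haw : a w w = T := by
    rw [apply_sum_smul_self heig]
    exact Finset.sum_congr rfl fun l _ => by field_simp [(hlam l).ne']
  have hw : w ≠ 0 := by
    rintro hw
    simp only [hw, map_zero] at haw
    exact hT.ne haw
  have key := residual_div_sqrt_le_residualDualNorm heig hlam μ x hw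
  rw [hrw, haw, Real.div_sqrt] at key
  calc T = Real.sqrt T ^ 2 := (Real.sq_sqrt hT.le).symm
    _ ≤ residualDualNorm a μ x ^ 2 := pow_le_pow_left₀ (Real.sqrt_nonneg T) key 2

end EigenbasisCoordinates

theorem OrthonormalBasis.sub_sum_inner_smul_eq_sum_compl {V : Type*} [NormedAddCommGroup V]
    [InnerProductSpace ℝ V] {ι : Type*} [Fintype ι] [DecidableEq ι]
    (b : OrthonormalBasis ι ℝ V) (x : V) (s : Finset ι) :
    x - ∑ l ∈ s, ⟪x, b l⟫ • b l = ∑ l ∈ sᶜ, ⟪x, b l⟫ • b l := by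
  rw [sub_eq_iff_eq_add', Finset.sum_add_sum_compl]
  simpa only [real_inner_comm x] using (b.sum_repr' x).symm

theorem sq_mul_sum_le_sum_of_le_abs_div {ι : Type*} (s : Finset ι) (lam α : ι → ℝ) {μ d : ℝ}
    (hlam : ∀ l ∈ s, 0 < lam l) (hd : 0 ≤ d) (hgap : ∀ l ∈ s, d ≤ |(lam l - μ) / lam l|) :
    d ^ 2 * ∑ l ∈ s, α l ^ 2 * lam l ≤ ∑ l ∈ s, (lam l - μ) ^ 2 * α l ^ 2 / lam l := by
  rw [Finset.mul_sum]
  refine Finset.sum_le_sum fun l hl => ?_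
  have hsq : d ^ 2 ≤ ((lam l - μ) / lam l) ^ 2 := by
    rw [← sq_abs ((lam l - μ) / lam l)]
    exact pow_le_pow_left₀ hd (hgap l hl) 2
  calc d ^ 2 * (α l ^ 2 * lam l) ≤ ((lam l - μ) / lam l) ^ 2 * (α l ^ 2 * lam l) := by
        have := hlam l hl
        gcongr
    _ = (lam l - μ) ^ 2 * α l ^ 2 / lam l := by field_simp [(hlam l hl).ne']

theorem eigenvector_error_bound_general
    {V : Type*} [NormedAddCommGroup V] [InnerProductSpace ℝ V]
    {n : ℕ}
    (b : OrthonormalBasis (Fin n) ℝ V)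
    (a : V →ₗ[ℝ] V →ₗ[ℝ] ℝ)
    (lam : Fin n → ℝ)
    (hlam_pos : ∀ l, 0 < lam l)
    (heig : ∀ (l : Fin n) (v : V), a (b l) v = lam l * ⟪b l, v⟫)
    (lamred : ℝ) (ured : V)
    (k q : ℕ)
    (dhat : ℝ)
    (hdhat : dhat =
      ⨅ l : {i : Fin n // k + q - 1 < (i : ℕ) + 1 ∨ (i : ℕ) + 1 < k},
        |(lam l.1 - lamred) / lam l.1|)
    (hdhat_pos : 0 < dhat)
    (rnorm : ℝ)
    (hrnorm : rnorm = ⨆ v : {w : V // w ≠ 0},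
        (a ured v.1 - lamred * ⟪ured, v.1⟫) / Real.sqrt (a v.1 v.1))
    (vbar : V)
    (hvbar : vbar =
      ∑ l ∈ Finset.univ.filter (fun i : Fin n => k ≤ (i : ℕ) + 1 ∧ (i : ℕ) + 1 ≤ k + q - 1),
        ⟪ured, b l⟫ • b l) :
    a (ured - vbar) (ured - vbar) =
      (∑ l ∈ Finset.univ.filter
          (fun i : Fin n => k + q - 1 < (i : ℕ) + 1 ∨ (i : ℕ) + 1 < k),
        ⟪ured, b l⟫ ^ 2 * lam l) ∧
    (∑ l ∈ Finset.univ.filter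
        (fun i : Fin n => k + q - 1 < (i : ℕ) + 1 ∨ (i : ℕ) + 1 < k),
      ⟪ured, b l⟫ ^ 2 * lam l) ≤ rnorm ^ 2 / dhat ^ 2 := by
  set far := Finset.univ.filter (fun i : Fin n => k + q - 1 < (i : ℕ) + 1 ∨ (i : ℕ) + 1 < k)
  have hdiff : ured - vbar = ∑ l ∈ far, ⟪ured, b l⟫ • b l := by
    rw [hvbar, b.sub_sum_inner_smul_eq_sum_compl, Finset.compl_filter]
    congr 1
    ext i
    simp only [Finset.mem_filter, Finset.mem_univ, true_and, far]
    omega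
  have hgap : ∀ l ∈ far, dhat ≤ |(lam l - lamred) / lam l| := fun l hl => by
    rw [hdhat]
    exact ciInf_le ⟨0, by rintro _ ⟨_, rfl⟩; exact abs_nonneg _⟩
      (⟨l, (Finset.mem_filter.1 hl).2⟩ : {i : Fin n // k + q - 1 < (i : ℕ) + 1 ∨ (i : ℕ) + 1 < k})
  refine ⟨by rw [hdiff, apply_sum_smul_self heig], ?_⟩
  rw [le_div_iff₀ (by positivity), mul_comm]
  calc dhat ^ 2 * ∑ l ∈ far, ⟪ured, b l⟫ ^ 2 * lam l
      ≤ ∑ l ∈ far, (lam l - lamred) ^ 2 * ⟪ured, b l⟫ ^ 2 / lam l :=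
        sq_mul_sum_le_sum_of_le_abs_div far lam _ (fun l _ => hlam_pos l) hdhat_pos.le hgap
    _ ≤ rnorm ^ 2 := hrnorm ▸ sum_sq_le_residualDualNorm_sq heig hlam_pos lamred ured far

/-- Eigenvector error bound (remark after Theorem 1): with `v̄` the `m`-orthogonal
projection of `u_red` onto the eigenspace `span{u_k, …, u_{k+q−1}}`,
`a(u_red − v̄, u_red − v̄) = Σ_{l > k+q−1 ∨ l < k} α_l² λ_l ≤ ‖r‖_{a,*}² / d̂²`. -/
theorem eigenvector_error_bound
    {V : Type*} [NormedAddCommGroup V] [InnerProductSpace ℝ V] [FiniteDimensional ℝ V]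
    {n : ℕ}
    (b : OrthonormalBasis (Fin n) ℝ V)
    (a : V →ₗ[ℝ] V →ₗ[ℝ] ℝ)
    (ha_symm : ∀ v w : V, a v w = a w v)
    (ha_pos : ∀ v : V, v ≠ 0 → 0 < a v v)
    (lam : Fin n → ℝ)
    (hlam_pos : ∀ l, 0 < lam l)
    (hlam_mono : Monotone lam)
    (heig : ∀ (l : Fin n) (v : V), a (b l) v = lam l * ⟪b l, v⟫)
    (lamred : ℝ) (ured : V)
    (hnorm : ⟪ured, ured⟫ = 1)
    (k q : ℕ) (hk : 1 ≤ k) (hq : 1 ≤ q) (hkq : k + q - 1 ≤ n)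
    (dhat : ℝ)
    (hdhat : dhat =
      ⨅ l : {i : Fin n // k + q - 1 < (i : ℕ) + 1 ∨ (i : ℕ) + 1 < k},
        |(lam l.1 - lamred) / lam l.1|)
    (hdhat_pos : 0 < dhat)
    (rnorm : ℝ)
    (hrnorm : rnorm = ⨆ v : {w : V // w ≠ 0},
        (a ured v.1 - lamred * ⟪ured, v.1⟫) / Real.sqrt (a v.1 v.1))
    (vbar : V)
    (hvbar : vbar =
      ∑ l ∈ Finset.univ.filter (fun i : Fin n => k ≤ (i : ℕ) + 1 ∧ (i : ℕ) + 1 ≤ k + q - 1),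
        ⟪ured, b l⟫ • b l) :
    a (ured - vbar) (ured - vbar) =
      (∑ l ∈ Finset.univ.filter
          (fun i : Fin n => k + q - 1 < (i : ℕ) + 1 ∨ (i : ℕ) + 1 < k),
        ⟪ured, b l⟫ ^ 2 * lam l) ∧
    (∑ l ∈ Finset.univ.filter
        (fun i : Fin n => k + q - 1 < (i : ℕ) + 1 ∨ (i : ℕ) + 1 < k),
      ⟪ured, b l⟫ ^ 2 * lam l) ≤ rnorm ^ 2 / dhat ^ 2 :=
  eigenvector_error_bound_general b a lam hlam_pos heig lamred ured k q dhat hdhat hdhat_pos rnorm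
    hrnorm vbar hvbar
end
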